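/- arXiv:2209.05681 — 8 statements merged into one kernel-verified Lean document; each statement's English description precedes it below -/
import Mathlib

section
/- Let A be an abelian group and let H be a Jordan group. Then the direct product A × H is a Jordan group and its Jordan constant satisfies J_{A × H} = J_H. -/
/-- A group `G` is a *Jordan group* if there is a positive integer `d` such that every
finite subgroup `H` of `G` contains a normal abelian subgroup of index at most `d` in `H`. -/
def IsJordanGroup (G : Type*) [Group G] : Prop :=
  ∃ d : ℕ, 0 < d ∧ ∀ H : Subgroup G, Finite H →
    ∃ A : Subgroup H, A.Normal ∧ IsMulCommutative A ∧ A.index ≤ d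

/-- The *Jordan constant* of a group `G`: the least positive integer `d` such that every
finite subgroup `H` of `G` contains a normal abelian subgroup of index at most `d` in `H`. -/
noncomputable def jordanConstant (G : Type*) [Group G] : ℕ :=
  sInf {d : ℕ | 0 < d ∧ ∀ H : Subgroup G, Finite H →
    ∃ A : Subgroup H, A.Normal ∧ IsMulCommutative A ∧ A.index ≤ d}

/-!
A finite subgroup `K` of `A × H` projects onto a finite subgroup of `H`; the preimage in `K` of
a normal abelian subgroup `B` of that projection is normal of the same index, and it is abelian
because its elements are determined by their `H`-coordinate (lying in `B`) together with their
`A`-coordinate (lying in the abelian group `A`). Conversely `H` embeds into `A × H`. So `A × H`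
and `H` admit exactly the same bounds `d`, hence the same Jordan constant.
-/

def HasJordanBound (G : Type*) [Group G] (d : ℕ) : Prop :=
  ∀ K : Subgroup G, Finite K → ∃ B : Subgroup K, B.Normal ∧ IsMulCommutative B ∧ B.index ≤ d

theorem Subgroup.isMulCommutative_comap_of_injective_prod {K L M : Type*} [Group K] [Group L]
    [CommGroup M] {f : K →* L} {g : K →* M} (hfg : Function.Injective (f.prod g))
    (B : Subgroup L) [IsMulCommutative B] : IsMulCommutative (B.comap f) := by
  refine ⟨⟨fun ⟨x, hx⟩ ⟨y, hy⟩ => Subtype.ext (hfg ?_)⟩⟩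
  simp only [MonoidHom.prod_apply, map_mul, Subgroup.coe_mul, Prod.mk_mul_mk]
  rw [setLike_mul_comm (s := B) hx hy, mul_comm (g x)]

theorem HasJordanBound.of_injective_prod {G G' M : Type*} [Group G] [Group G'] [CommGroup M]
    {d : ℕ} (h : HasJordanBound G' d) {f : G →* G'} {g : G →* M}
    (hfg : Function.Injective (f.prod g)) : HasJordanBound G d := by
  intro K _
  have hfK : Function.Surjective (f.subgroupMap K) := f.subgroupMap_surjective K
  obtain ⟨B, hBn, hBc, hBi⟩ := h (K.map f) (Finite.of_surjective _ hfK)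
  have hfgK : Function.Injective ((f.subgroupMap K).prod (g.comp K.subtype)) := by
    intro x y hxy
    exact Subtype.ext <| hfg <|
      Prod.ext (congrArg (fun p => (p.1 : G')) hxy) (congrArg (fun p => p.2) hxy)
  exact ⟨B.comap (f.subgroupMap K), hBn.comap _,
    Subgroup.isMulCommutative_comap_of_injective_prod hfgK B,
    (B.index_comap_of_surjective hfK).trans_le hBi⟩

theorem hasJordanBound_prod_iff {A H : Type*} [CommGroup A] [Group H] {d : ℕ} :
    HasJordanBound (A × H) d ↔ HasJordanBound H d := by
  refine ⟨fun h => h.of_injective_prod (f := MonoidHom.inr A H) (g := (1 : H →* A)) ?_,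
    fun h => h.of_injective_prod (f := MonoidHom.snd A H) (g := MonoidHom.fst A H) ?_⟩
  · intro x y hxy
    simpa using congrArg (fun p => p.1.2) hxy
  · intro x y hxy
    simpa [Prod.ext_iff, and_comm] using hxy

/-- If `A` is an abelian group and `H` is a Jordan group, then `A × H` is a Jordan group
and `J_{A × H} = J_H`. -/
theorem stmt_0 (A H : Type*) [CommGroup A] [Group H] (hH : IsJordanGroup H) :
    IsJordanGroup (A × H) ∧ jordanConstant (A × H) = jordanConstant H := by
  obtain ⟨d, hd0, hd⟩ := hH
  refine ⟨⟨d, hd0, hasJordanBound_prod_iff.2 hd⟩, ?_⟩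
  show sInf {d | 0 < d ∧ HasJordanBound (A × H) d} = sInf {d | 0 < d ∧ HasJordanBound H d}
  simp_rw [hasJordanBound_prod_iff]
end

section
/- Let m ≥ 3 be an integer and let φ be a nontrivial group homomorphism from the cyclic group C₂ of order 2 to the automorphism group of the cyclic group C_m of order m. Then the semidirect product C_m ⋊_φ C₂ has Jordan constant equal to 2. -/
/-!
Every subgroup `H` of `Cₘ ⋊ C₂` meets the abelian normal subgroup `Cₘ` in a normal abelian subgroup
of index at most `2` in `H`, so the Jordan constant is at most `2`. A nontrivial action makes the
group nonabelian, and since the group is finite, taking `H` to be the whole group rules out `1`.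
-/

section Jordan

variable {G : Type*} [Group G]

theorem isJordanGroup_of_finite [Finite G] : IsJordanGroup G :=
  ⟨Nat.card G, Nat.card_pos, fun H _ =>
    ⟨⊥, inferInstance, inferInstance, by
      rw [Subgroup.index_bot]
      exact H.card_le_card_group⟩⟩

theorem two_le_jordanConstant [Finite G] (hG : ¬ IsMulCommutative G) : 2 ≤ jordanConstant G := by
  refine le_csInf isJordanGroup_of_finite ?_
  rintro d ⟨-, hd_bound⟩
  obtain ⟨A, -, _, hA_index⟩ := hd_bound ⊤ inferInstance
  by_contra! hd_lt
  have hA_top : A = ⊤ := Subgroup.index_eq_one.mp (by have := A.index_ne_zero_of_finite; omega)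
  subst hA_top
  refine hG (.of_comm fun a b => ?_)
  have hab := mul_comm' (⟨⟨a, trivial⟩, trivial⟩ : (⊤ : Subgroup (⊤ : Subgroup G)))
    ⟨⟨b, trivial⟩, trivial⟩
  exact congr(($hab : G))

theorem jordanConstant_le_card_of_isMulCommutative_ker {Q : Type*} [Group Q] [Finite Q]
    (f : G →* Q) [IsMulCommutative f.ker] : jordanConstant G ≤ Nat.card Q := by
  refine Nat.sInf_le ⟨Nat.card_pos, fun H _ => ⟨f.ker.subgroupOf H, inferInstance, inferInstance, ?_⟩⟩
  rw [Subgroup.subgroupOf, MonoidHom.comap_ker, Subgroup.index_ker]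
  exact Nat.card_le_card_of_injective _ Subtype.val_injective

end Jordan

namespace SemidirectProduct

variable {N K : Type*} [Group N] [Group K] {φ : K →* MulAut N}

instance [Finite N] [Finite K] : Finite (N ⋊[φ] K) :=
  .of_equiv _ equivProd.symm

instance isMulCommutative_ker_rightHom [IsMulCommutative N] :
    IsMulCommutative (rightHom : N ⋊[φ] K →* K).ker := by
  rw [← range_inl_eq_ker_rightHom, MonoidHom.range_eq_map]
  infer_instance

theorem not_isMulCommutative_of_ne_one (hφ : φ ≠ 1) : ¬ IsMulCommutative (N ⋊[φ] K) := by
  intro hcomm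
  obtain ⟨k, hk⟩ := DFunLike.ne_iff.mp hφ
  obtain ⟨n, hn⟩ := DFunLike.ne_iff.mp hk
  apply hn
  simpa using congr(($(mul_comm' (inr k : N ⋊[φ] K) (inl n))).left)

end SemidirectProduct

/-- For `m ≥ 3` and a nontrivial action `φ` of the cyclic group of order `2` on the cyclic
group of order `m`, the semidirect product `C_m ⋊[φ] C₂` has Jordan constant `2`. -/
theorem stmt_2 (m : ℕ) (hm : 3 ≤ m)
    (φ : Multiplicative (ZMod 2) →* MulAut (Multiplicative (ZMod m)))
    (hφ : φ ≠ 1) :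
    jordanConstant (Multiplicative (ZMod m) ⋊[φ] Multiplicative (ZMod 2)) = 2 := by
  have : NeZero m := ⟨by omega⟩
  refine le_antisymm ?_ (two_le_jordanConstant (SemidirectProduct.not_isMulCommutative_of_ne_one hφ))
  simpa using jordanConstant_le_card_of_isMulCommutative_ker
    (SemidirectProduct.rightHom : Multiplicative (ZMod m) ⋊[φ] Multiplicative (ZMod 2) →* _)
end

section
/- For every integer n ≥ 2, the direct product Dic₄ₙ × Dic₄ₙ of two copies of the dicyclic group of order 4n has Jordan constant equal to 4. -/
def IsJordanBound (G : Type*) [Group G] (d : ℕ) : Prop :=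
  0 < d ∧ ∀ H : Subgroup G, Finite H → ∃ A : Subgroup H, A.Normal ∧ IsMulCommutative A ∧ A.index ≤ d

open Subgroup

section Jordan

variable {G : Type*} [Group G]

lemma isJordanBound_index (N : Subgroup G) [N.Normal] [IsMulCommutative N] [N.FiniteIndex] :
    IsJordanBound G N.index := by
  have hN : 0 < N.index := Nat.pos_of_ne_zero FiniteIndex.index_ne_zero
  exact ⟨hN, fun H _ => ⟨N.subgroupOf H, inferInstance, inferInstance,
    Nat.le_of_dvd hN (N.relIndex_dvd_index_of_normal H)⟩⟩

lemma jordanConstant_le_index (N : Subgroup G) [N.Normal] [IsMulCommutative N] [N.FiniteIndex] :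
    jordanConstant G ≤ N.index :=
  Nat.sInf_le (isJordanBound_index N)

lemma le_jordanConstant [Finite G] {d : ℕ}
    (h : ∀ B : Subgroup G, IsMulCommutative B → d ≤ B.index) : d ≤ jordanConstant G := by
  obtain ⟨-, hG⟩ : IsJordanBound G (jordanConstant G) :=
    Nat.sInf_mem (s := {d | IsJordanBound G d}) ⟨_, isJordanBound_index (⊥ : Subgroup G)⟩
  obtain ⟨A, -, _, hA⟩ := hG ⊤ inferInstance
  calc d ≤ (A.map (topEquiv : (⊤ : Subgroup G) ≃* G).toMonoidHom).index := h _ inferInstance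
    _ = A.index := index_map_equiv A topEquiv
    _ ≤ jordanConstant G := hA

end Jordan

lemma Subgroup.two_le_index_of_isMulCommutative {G : Type*} [Group G] [Finite G] {x y : G}
    (hxy : x * y ≠ y * x) (B : Subgroup G) [IsMulCommutative B] : 2 ≤ B.index :=
  one_lt_index_of_ne_top fun hB =>
    hxy (setLike_mul_comm (hB ▸ mem_top x : x ∈ B) (hB ▸ mem_top y))

lemma Subgroup.four_le_index_of_isMulCommutative_prod {G₁ G₂ : Type*} [Group G₁] [Group G₂]
    [Finite G₁] [Finite G₂] {x₁ y₁ : G₁} {x₂ y₂ : G₂} (h₁ : x₁ * y₁ ≠ y₁ * x₁)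
    (h₂ : x₂ * y₂ ≠ y₂ * x₂) (B : Subgroup (G₁ × G₂)) [IsMulCommutative B] : 4 ≤ B.index :=
  calc 4 = 2 * 2 := rfl
    _ ≤ (B.map (MonoidHom.fst G₁ G₂)).index * (B.map (MonoidHom.snd G₁ G₂)).index :=
      Nat.mul_le_mul (two_le_index_of_isMulCommutative h₁ _) (two_le_index_of_isMulCommutative h₂ _)
    _ = ((B.map (MonoidHom.fst G₁ G₂)).prod (B.map (MonoidHom.snd G₁ G₂))).index :=
      (index_prod _ _).symm
    _ ≤ B.index := index_antitone (le_prod_iff.2 ⟨le_rfl, le_rfl⟩)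

instance Subgroup.prod_isMulCommutative {G₁ G₂ : Type*} [Group G₁] [Group G₂]
    (H : Subgroup G₁) (K : Subgroup G₂) [IsMulCommutative H] [IsMulCommutative K] :
    IsMulCommutative (H.prod K) :=
  ⟨⟨fun ⟨_, hx⟩ ⟨_, hy⟩ => Subtype.ext <| Prod.ext
    (setLike_mul_comm (s := H) hx.1 hy.1) (setLike_mul_comm (s := K) hx.2 hy.2)⟩⟩

namespace QuaternionGroup

variable {n : ℕ}

lemma index_zpowers_a_one [NeZero n] : (zpowers (a 1 : QuaternionGroup n)).index = 2 := by
  have h := (zpowers (a 1 : QuaternionGroup n)).index_mul_card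
  rw [Nat.card_zpowers, orderOf_a_one, Nat.card_eq_fintype_card, card] at h
  exact Nat.eq_of_mul_eq_mul_right (Nat.mul_pos two_pos (NeZero.pos n)) (by rw [h]; ring)

lemma a_one_mul_xa_zero_ne (hn : 2 ≤ n) : a 1 * xa 0 ≠ (xa 0 * a 1 : QuaternionGroup n) := by
  rw [a_mul_xa, xa_mul_a, Ne, xa.injEq, zero_sub, zero_add, neg_eq_iff_add_eq_zero, one_add_one_eq_two]
  have h : ((2 : ℕ) : ZMod (2 * n)) ≠ 0 := by
    rw [Ne, ZMod.natCast_eq_zero_iff]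
    exact fun h => by have := Nat.le_of_dvd two_pos h; omega
  exact_mod_cast h

end QuaternionGroup

open QuaternionGroup

/-- For `n ≥ 2`, the direct product `Dic₄ₙ × Dic₄ₙ` has Jordan constant `4`. -/
theorem stmt_4 (n : ℕ) (hn : 2 ≤ n) :
    jordanConstant (QuaternionGroup n × QuaternionGroup n) = 4 := by
  have : NeZero n := ⟨by omega⟩
  have hQ := a_one_mul_xa_zero_ne hn
  refine le_antisymm ?_
    (le_jordanConstant fun B _ => four_le_index_of_isMulCommutative_prod hQ hQ B)
  have := normal_of_index_eq_two (index_zpowers_a_one (n := n))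
  calc jordanConstant _ ≤ ((zpowers (a 1 : QuaternionGroup n)).prod (zpowers (a 1))).index :=
        jordanConstant_le_index _
    _ = 4 := by rw [index_prod, index_zpowers_a_one]
end

section
/- The general linear group GL(2, F₃) over the field with three elements has Jordan constant equal to 24; equivalently, the only abelian normal subgroups of GL(2, F₃) are the trivial subgroup and its center of order 2. -/
/-!
Every abelian normal subgroup `A` of `GL(2, 𝔽₃)` is central: a non-scalar invertible matrix over
`𝔽₃` fails to commute with its conjugate by one of two fixed matrices, a finite check. The centre
`{±1}` has prime order, so `A` is trivial or the centre, and the least index of an abelian normal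
subgroup of `GL(2, 𝔽₃)` is `48 / 2 = 24`. A proper subgroup has order at most `24`, so its trivial
subgroup already has index at most `24`.
-/

namespace Subgroup

variable {G : Type*} [Group G]

theorem le_center_of_forall_commute_conj {A : Subgroup G} [A.Normal] [IsMulCommutative A]
    (h : ∀ a : G, (∀ g : G, Commute a (g * a * g⁻¹)) → a ∈ center G) : A ≤ center G :=
  fun a ha ↦ h a fun g ↦ setLike_mul_comm ha (Normal.conj_mem ‹_› a ha g)

theorem eq_bot_or_eq_of_le_of_card_prime {A B : Subgroup G} (hAB : A ≤ B)
    (hB : (Nat.card B).Prime) : A = ⊥ ∨ A = B := by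
  have : Finite B := Nat.finite_of_card_ne_zero hB.ne_zero
  rcases (Nat.dvd_prime hB).mp (card_dvd_of_le hAB) with h | h
  · exact .inl (card_eq_one.mp h)
  · exact .inr (eq_of_le_of_card_ge hAB h.ge)

end Subgroup

open Subgroup

section Jordan

variable {G : Type*} [Group G]

theorem jordanConstant_eq {d : ℕ} (hd : 0 < d)
    (hbound : ∀ H : Subgroup G, Finite H →
      ∃ A : Subgroup H, A.Normal ∧ IsMulCommutative A ∧ A.index ≤ d)
    (H₀ : Subgroup G) [Finite H₀]
    (hH₀ : ∀ A : Subgroup H₀, A.Normal → IsMulCommutative A → d ≤ A.index) :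
    jordanConstant G = d :=
  IsLeast.csInf_eq ⟨⟨hd, hbound⟩, fun _ ⟨_, he⟩ ↦
    let ⟨A, hN, hC, hA⟩ := he H₀ inferInstance
    (hH₀ A hN hC).trans hA⟩

theorem card_mul_two_le_of_ne_top [Finite G] {H : Subgroup G} (hH : H ≠ ⊤) :
    Nat.card H * 2 ≤ Nat.card G :=
  card_mul_index H ▸ Nat.mul_le_mul_left _ (one_lt_index_of_ne_top hH)

theorem jordanConstant_eq_index_of_finite [Finite G] (Z : Subgroup G) [Z.Normal]
    [IsMulCommutative Z]
    (hmin : ∀ A : Subgroup G, A.Normal → IsMulCommutative A → Z.index ≤ A.index)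
    (hcard : Nat.card G ≤ 2 * Z.index) :
    jordanConstant G = Z.index := by
  refine jordanConstant_eq (Nat.pos_of_ne_zero index_ne_zero_of_finite) ?_ ⊤ fun A hN hC ↦ ?_
  · intro H _
    by_cases hH : H = ⊤
    · subst hH
      exact ⟨Z.subgroupOf ⊤, inferInstance,
        comap_injective_isMulCommutative Z (subtype_injective ⊤), (relIndex_top_right Z).le⟩
    · exact ⟨⊥, inferInstance, inferInstance, by
        rw [index_bot]; linarith [card_mul_two_le_of_ne_top hH]⟩
  · rw [← index_map_equiv A topEquiv]
    exact hmin _ (hN.map _ topEquiv.surjective) (map_isMulCommutative A _)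

end Jordan

namespace Matrix.GeneralLinearGroup

local notation "GL₂𝔽₃" => GL (Fin 2) (ZMod 3)

theorem card_GL_two_zmod_three : Nat.card GL₂𝔽₃ = 48 := by
  rw [card_GL_field, Fin.prod_univ_two, ZMod.card]
  norm_num

theorem card_center_GL_two_zmod_three : Nat.card (center GL₂𝔽₃) = 2 := by
  have hinj : Function.Injective (scalar (Fin 2) (R := ZMod 3)) := fun a b h ↦
    Units.ext (Matrix.scalar_inj.mp (congrArg Units.val h))
  rw [center_eq_range_scalar, ← Nat.card_congr (MonoidHom.ofInjective hinj).toEquiv,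
    Nat.card_eq_fintype_card, ZMod.card_units]

theorem index_center_GL_two_zmod_three : (center GL₂𝔽₃).index = 24 := by
  have h := index_mul_card (center GL₂𝔽₃)
  rw [card_center_GL_two_zmod_three, card_GL_two_zmod_three] at h
  omega

private def swapRows : GL₂𝔽₃ := ⟨!![0, 1; 1, 0], !![0, 1; 1, 0], by decide, by decide⟩

private def shear : GL₂𝔽₃ := ⟨!![0, 1; 1, 1], !![2, 1; 1, 0], by decide, by decide⟩

private theorem eq_one_or_eq_neg_one_of_commute_conj : ∀ a : Matrix (Fin 2) (Fin 2) (ZMod 3),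
    a.det ≠ 0 →
    a * (!![0, 1; 1, 0] * a * !![0, 1; 1, 0]) = !![0, 1; 1, 0] * a * !![0, 1; 1, 0] * a →
    a * (!![0, 1; 1, 1] * a * !![2, 1; 1, 0]) = !![0, 1; 1, 1] * a * !![2, 1; 1, 0] * a →
    a = 1 ∨ a = -1 := by
  decide

theorem mem_center_GL_two_zmod_three_of_commute_conj {a : GL₂𝔽₃}
    (h : ∀ g : GL₂𝔽₃, Commute a (g * a * g⁻¹)) : a ∈ center GL₂𝔽₃ := by
  rcases eq_one_or_eq_neg_one_of_commute_conj a (det_ne_zero a)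
    (congrArg Units.val (h swapRows)) (congrArg Units.val (h shear)) with ha | ha
  · rw [Units.ext (ha.trans Units.val_one.symm)]
    exact one_mem _
  · rw [Units.ext (ha.trans Units.coe_neg_one.symm)]
    exact mem_center_iff.mpr fun g ↦ by rw [mul_neg_one, neg_one_mul]

theorem le_center_GL_two_zmod_three {A : Subgroup GL₂𝔽₃} [A.Normal] [IsMulCommutative A] :
    A ≤ center GL₂𝔽₃ :=
  le_center_of_forall_commute_conj fun _ ↦ mem_center_GL_two_zmod_three_of_commute_conj

end Matrix.GeneralLinearGroup

open Matrix.GeneralLinearGroup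

/-- `GL(2, F₃)` has Jordan constant `24`; equivalently, the only abelian normal subgroups of
`GL(2, F₃)` are the trivial subgroup and the center, which has order `2`. -/
theorem stmt_8 :
    jordanConstant (Matrix.GeneralLinearGroup (Fin 2) (ZMod 3)) = 24 ∧
    (∀ A : Subgroup (Matrix.GeneralLinearGroup (Fin 2) (ZMod 3)), A.Normal → IsMulCommutative A →
      A = ⊥ ∨ A = Subgroup.center (Matrix.GeneralLinearGroup (Fin 2) (ZMod 3))) ∧
    Nat.card (Subgroup.center (Matrix.GeneralLinearGroup (Fin 2) (ZMod 3))) = 2 := by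
  refine ⟨?_, fun A _ _ ↦ eq_bot_or_eq_of_le_of_card_prime le_center_GL_two_zmod_three
    (by rw [card_center_GL_two_zmod_three]; exact Nat.prime_two), card_center_GL_two_zmod_three⟩
  rw [jordanConstant_eq_index_of_finite (center _)
    (fun A _ _ ↦ index_antitone le_center_GL_two_zmod_three)
    (by rw [card_GL_two_zmod_three, index_center_GL_two_zmod_three]),
    index_center_GL_two_zmod_three]
end

section
/- The direct product SL(2, F₃) × C₃ of the special linear group over the field with three elements and the cyclic group of order 3 has Jordan constant equal to 12; its maximal abelian normal subgroup is the subgroup Z(SL(2, F₃)) × C₃, which is cyclic of order 6. -/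
/-! In `SL(2, F₃)` every non-central element fails to commute with one of its conjugates, so an
abelian normal subgroup of `SL(2, F₃)` is central. An abelian normal subgroup of
`SL(2, F₃) × C₃` projects to one of `SL(2, F₃)`, hence lies in `N = Z(SL(2, F₃)) × C₃`, which is
itself abelian and normal, of order `2 · 3`. So `N` is the largest abelian normal subgroup. In a
finite group with a largest abelian normal subgroup `N`, the Jordan constant is `[G : N]`: every
finite `H` meets `N` in an abelian normal subgroup of index dividing `[G : N]`, while for `H = G`
nothing of smaller index exists. Here `[G : N] = 72 / 6 = 12`. -/

open Subgroup Matrix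

namespace Subgroup

variable {G K : Type*} [Group G] [Group K]

instance prod_isMulCommutative_s9 (H : Subgroup G) (L : Subgroup K) [IsMulCommutative H]
    [IsMulCommutative L] : IsMulCommutative (H.prod L) :=
  .of_setLike_mul_comm fun _ ha _ hb =>
    Prod.ext (setLike_mul_comm ha.1 hb.1) (setLike_mul_comm ha.2 hb.2)

theorem card_prod (H : Subgroup G) (L : Subgroup K) :
    Nat.card (H.prod L) = Nat.card H * Nat.card L := by
  rw [Nat.card_congr (prodEquiv H L).toEquiv, Nat.card_prod]

theorem isCyclic_prod (H : Subgroup G) (L : Subgroup K) [IsCyclic H] [IsCyclic L]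
    (h : (Nat.card H).Coprime (Nat.card L)) : IsCyclic (H.prod L) := by
  rw [(prodEquiv H L).isCyclic, Group.isCyclic_prod_iff]
  exact ⟨inferInstance, inferInstance, h⟩

theorem le_center_of_exists_conj_not_commute
    (h : ∀ s : G, (∀ g, g * s = s * g) ∨ ∃ g, g * s * g⁻¹ * s ≠ s * (g * s * g⁻¹))
    (A : Subgroup G) [hA : A.Normal] [IsMulCommutative A] : A ≤ center G := by
  intro s hs
  rcases h s with hcentral | ⟨g, hg⟩
  · exact mem_center_iff.mpr hcentral
  · exact absurd (setLike_mul_comm (hA.conj_mem s hs g) hs) hg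

theorem le_center_prod_top
    (hG : ∀ A : Subgroup G, A.Normal → IsMulCommutative A → A ≤ center G)
    (A : Subgroup (G × K)) [hA : A.Normal] [IsMulCommutative A] :
    A ≤ (center G).prod ⊤ := fun _ hx =>
  ⟨hG _ (hA.map _ fun g => ⟨(g, 1), rfl⟩) inferInstance (mem_map_of_mem (MonoidHom.fst G K) hx),
    trivial⟩

end Subgroup

theorem jordanConstant_eq_index {G : Type*} [Group G] [Finite G] (N : Subgroup G) [N.Normal]
    [IsMulCommutative N] (hN : ∀ A : Subgroup G, A.Normal → IsMulCommutative A → A ≤ N) :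
    jordanConstant G = N.index := by
  refine IsLeast.csInf_eq ⟨⟨Nat.pos_of_ne_zero FiniteIndex.index_ne_zero, fun H _ =>
    ⟨N.subgroupOf H, inferInstance, inferInstance,
      Nat.le_of_dvd (Nat.pos_of_ne_zero FiniteIndex.index_ne_zero)
        (relIndex_dvd_index_of_normal N H)⟩⟩, ?_⟩
  rintro d ⟨-, hd⟩
  obtain ⟨A, hA, _, hAd⟩ := hd ⊤ inferInstance
  have hAN : A.map (⊤ : Subgroup G).subtype ≤ N :=
    hN _ (hA.map _ fun g => ⟨⟨g, trivial⟩, rfl⟩) inferInstance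
  calc N.index ≤ (A.map (⊤ : Subgroup G).subtype).index := index_antitone hAN
    _ = A.index := by rw [index_map_subtype, index_top, mul_one]
    _ ≤ d := hAd

namespace Matrix.SpecialLinearGroup

theorem exists_conj_not_commute_fin_two_zmod_three :
    ∀ s : SpecialLinearGroup (Fin 2) (ZMod 3),
      (∀ g, g * s = s * g) ∨ ∃ g, g * s * g⁻¹ * s ≠ s * (g * s * g⁻¹) := by
  decide

theorem card_fin_two_zmod_three : Nat.card (SpecialLinearGroup (Fin 2) (ZMod 3)) = 24 := by
  rw [Nat.card_eq_fintype_card]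
  decide

theorem card_center_fin_two_zmod_three :
    Nat.card (center (SpecialLinearGroup (Fin 2) (ZMod 3))) = 2 := by
  rw [Nat.card_eq_fintype_card]
  decide

end Matrix.SpecialLinearGroup

/-- `SL(2, F₃) × C₃` has Jordan constant `12`; its maximal abelian normal subgroup is
`Z(SL(2, F₃)) × C₃`, which is cyclic of order `6` and contains every abelian normal
subgroup. -/
theorem stmt_9 :
    jordanConstant (Matrix.SpecialLinearGroup (Fin 2) (ZMod 3) × Multiplicative (ZMod 3)) = 12 ∧
    (∀ A : Subgroup (Matrix.SpecialLinearGroup (Fin 2) (ZMod 3) × Multiplicative (ZMod 3)),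
      A.Normal → IsMulCommutative A →
      A ≤ (Subgroup.center (Matrix.SpecialLinearGroup (Fin 2) (ZMod 3))).prod
        (⊤ : Subgroup (Multiplicative (ZMod 3)))) ∧
    Nat.card ((Subgroup.center (Matrix.SpecialLinearGroup (Fin 2) (ZMod 3))).prod
        (⊤ : Subgroup (Multiplicative (ZMod 3)))) = 6 ∧
    IsCyclic ((Subgroup.center (Matrix.SpecialLinearGroup (Fin 2) (ZMod 3))).prod
        (⊤ : Subgroup (Multiplicative (ZMod 3)))) := by
  have hC₃ : Nat.card (Multiplicative (ZMod 3)) = 3 := by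
    rw [Nat.card_congr Multiplicative.toAdd, Nat.card_zmod]
  have hZ := SpecialLinearGroup.card_center_fin_two_zmod_three
  have hmax := le_center_prod_top (K := Multiplicative (ZMod 3))
    (le_center_of_exists_conj_not_commute
      SpecialLinearGroup.exists_conj_not_commute_fin_two_zmod_three)
  have hcard : Nat.card ((center (SpecialLinearGroup (Fin 2) (ZMod 3))).prod
      (⊤ : Subgroup (Multiplicative (ZMod 3)))) = 6 := by
    rw [card_prod, hZ, card_top, hC₃]
  refine ⟨?_, hmax, hcard, ?_⟩
  · have hindex := card_mul_index ((center (SpecialLinearGroup (Fin 2) (ZMod 3))).prod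
      (⊤ : Subgroup (Multiplicative (ZMod 3))))
    rw [hcard, Nat.card_prod, SpecialLinearGroup.card_fin_two_zmod_three, hC₃] at hindex
    rw [jordanConstant_eq_index _ hmax]
    omega
  · have := isCyclic_of_prime_card hZ
    exact isCyclic_prod _ _ (by rw [hZ, card_top, hC₃]; decide)
end

section
/- Let G be a finite group with a normal subgroup K satisfying: K has order 32, the center Z(K) of K has order 2, the quotient K/Z(K) is an elementary abelian 2-group (so a 4-dimensional vector space over F₂), the quotient G/K is isomorphic to the alternating group Alt₅ on 5 letters, and the conjugation action of G on K/Z(K) is nontrivial (i.e., there exist g ∈ G and x ∈ K with gxg⁻¹x⁻¹ ∉ Z(K)). Then every nontrivial abelian normal subgroup of G is equal to Z(K), and the Jordan constant of G equals 960. -/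
/-
An abelian normal subgroup `N` of `G` lies in `K`, since `G/K ≅ Alt₅` is simple and
non-abelian. Its image `W` in `V = K/Z(K) ≅ 𝔽₂⁴` is `G`-invariant. If `W = V` then `K` would
be abelian. If `1 < W < V`, an element `g` of order `5` modulo `K` acts on `W` and on `V/W`,
groups of order dividing `8`, by automorphisms of order dividing `5`; counting fixed points
modulo `5` shows both actions are trivial, so `g` acts unipotently on the exponent-`2` group
`V`, hence with square `1`, hence trivially. By simplicity of `G/K` all of `G` then acts
trivially on `V`, which is excluded. So `W = 1`, i.e. `N ≤ Z(K)`, and `N = Z(K)` as `|Z(K)| = 2`.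

Thus `Z(K)` is the only nontrivial abelian normal subgroup, so for `H = G` the best index is
`|G|/2 = 960`, while for a proper subgroup `H` already the trivial subgroup has index
`|H| ≤ 960`.
-/

open Subgroup QuotientGroup

lemma Nat.dvd_eight_of_mul_eq_sixteen {c i : ℕ} (h : i * c = 16) (hc : c ≠ 1) (hi : i ≠ 1) :
    c ∣ 8 ∧ i ∣ 8 := by
  have hc16 : c ∣ 16 := Dvd.intro_left _ h
  obtain rfl : i = 16 / c := by
    rw [← h, Nat.mul_div_cancel _ (Nat.pos_of_dvd_of_pos hc16 (by norm_num))]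
  have : c ≤ 16 := Nat.le_of_dvd (by norm_num) hc16
  interval_cases c <;> simp_all

lemma commute_of_forall_mul_self_eq_one {V : Type*} [Group V] (hV : ∀ v : V, v * v = 1)
    (a b : V) : Commute a b :=
  Commute.of_orderOf_dvd_two (fun v => orderOf_dvd_of_pow_eq_one ((sq v).trans (hV v))) a b

namespace MulAut

variable {A : Type*} [Group A]

def quotient (N : Subgroup A) [N.Characteristic] : MulAut A →* MulAut (A ⧸ N) where
  toFun φ := QuotientGroup.congr N N φ (characteristic_iff_map_eq.mp inferInstance φ)
  map_one' := by ext ⟨x⟩; rfl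
  map_mul' _ _ := by ext ⟨x⟩; rfl

lemma eq_one_of_pow_five_eq_one_of_card_dvd_eight [Finite A] (hA : Nat.card A ∣ 8)
    (τ : MulAut A) (h5 : τ ^ 5 = 1) : τ = 1 := by
  have : Fact (Nat.Prime 5) := ⟨Nat.prime_five⟩
  have hP : IsPGroup 5 (zpowers τ) := by
    obtain ⟨m, -, hm⟩ := (Nat.dvd_prime_pow (m := 1) Nat.prime_five).mp
      ((pow_one 5).symm ▸ orderOf_dvd_of_pow_eq_one h5)
    exact IsPGroup.of_card (n := m) (by rw [Nat.card_zpowers, hm])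
  set F := FixedPoints.subgroup (zpowers τ) A
  have hmod : Nat.card A ≡ Nat.card F [MOD 5] := hP.card_modEq_card_fixedPoints A
  have hFA : Nat.card F = Nat.card A := by
    have hF : Nat.card F ∣ Nat.card A := card_subgroup_dvd_card F
    have : Nat.card A ≤ 8 := Nat.le_of_dvd (by norm_num) hA
    have : Nat.card F ≤ Nat.card A := Nat.le_of_dvd Nat.card_pos hF
    have : 0 < Nat.card F := Nat.card_pos
    unfold Nat.ModEq at hmod
    -- the divisors `1, 2, 4, 8` of `8` are pairwise incongruent modulo `5`
    interval_cases h : Nat.card A <;> interval_cases Nat.card F <;> omega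
  have hF : F = ⊤ := eq_top_of_card_eq F hFA
  ext a
  exact (FixedPoints.mem_subgroup _ A a).mp (hF ▸ mem_top a : a ∈ F) ⟨τ, mem_zpowers τ⟩

variable {V : Type*} [Group V]

lemma sq_eq_one_of_fixes_subgroup_and_quotient (hV : ∀ v : V, v * v = 1) (W : Subgroup V)
    (τ : MulAut V) (hW : ∀ w ∈ W, τ w = w) (hVW : ∀ v, v⁻¹ * τ v ∈ W) : τ ^ 2 = 1 := by
  ext v
  obtain ⟨w, hw, hτv⟩ : ∃ w ∈ W, τ v = v * w := ⟨v⁻¹ * τ v, hVW v, by group⟩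
  rw [sq, mul_apply, hτv, map_mul, hτv, hW w hw, mul_assoc, hV, mul_one, one_apply]

lemma eq_one_of_pow_five_eq_one_of_invariant [Finite V] (hV : ∀ v : V, v * v = 1)
    (hcard : Nat.card V = 16) (τ : MulAut V) (h5 : τ ^ 5 = 1) (W : Subgroup V)
    (hW_bot : W ≠ ⊥) (hW_top : W ≠ ⊤) (hτW : ∀ w ∈ W, τ w ∈ W) : τ = 1 := by
  have : W.Normal := ⟨fun n hn g => by
    rwa [(commute_of_forall_mul_self_eq_one hV g n).eq, mul_inv_cancel_right]⟩
  have hmap : W.map τ.toMonoidHom = W := by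
    refine eq_of_le_of_card_ge (map_le_iff_le_comap.mpr hτW) ?_
    rw [card_map_of_injective τ.injective]
  have hdvd : Nat.card W ∣ 8 ∧ W.index ∣ 8 := by
    refine Nat.dvd_eight_of_mul_eq_sixteen (hcard ▸ W.index_mul_card)
      (fun h => hW_bot (card_eq_one.mp h)) (fun h => hW_top (index_eq_one.mp h))
  let τW : MulAut W := (τ.subgroupMap W).trans (MulEquiv.subgroupCongr hmap)
  have hτW5 : τW ^ 5 = 1 := by
    ext w
    exact DFunLike.congr_fun h5 (w : V)
  let τQ : MulAut (V ⧸ W) := QuotientGroup.congr W W τ hmap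
  have hτQ5 : τQ ^ 5 = 1 := by
    ext q
    induction q using QuotientGroup.induction_on with | H v => ?_
    exact congr((($h5) v : V ⧸ W))
  have hfixW : ∀ w ∈ W, τ w = w := fun w hw => congr_arg Subtype.val <|
    DFunLike.congr_fun (eq_one_of_pow_five_eq_one_of_card_dvd_eight hdvd.1 τW hτW5) (⟨w, hw⟩ : W)
  have hfixQ : ∀ v, v⁻¹ * τ v ∈ W := fun v => QuotientGroup.eq.mp <| Eq.symm <|
    DFunLike.congr_fun (eq_one_of_pow_five_eq_one_of_card_dvd_eight hdvd.2 τQ hτQ5) (v : V ⧸ W)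
  have h2 := sq_eq_one_of_fixes_subgroup_and_quotient hV W τ hfixW hfixQ
  calc τ = τ ^ 5 * ((τ ^ 2)⁻¹) ^ 2 := by group
    _ = 1 := by rw [h5, h2]; group

end MulAut

lemma Subgroup.le_of_isSimpleGroup_quotient {G : Type*} [Group G] {K : Subgroup G} [K.Normal]
    [IsSimpleGroup (G ⧸ K)] (hK : ¬ (Nat.card (G ⧸ K)).Prime) (N : Subgroup G) [N.Normal]
    [IsMulCommutative N] : N ≤ K := by
  rcases (Normal.map inferInstance _ (mk'_surjective K) : (N.map (mk' K)).Normal).eq_bot_or_eq_top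
    with h | h
  · rwa [map_eq_bot_iff, ker_mk'] at h
  · let : CommGroup (G ⧸ K) :=
      { mul_comm := fun a b => setLike_mul_comm (h ▸ mem_top a) (h ▸ mem_top b) }
    exact absurd IsSimpleGroup.prime_card hK

lemma Subgroup.eq_top_of_lt_of_isSimpleGroup_quotient {G : Type*} [Group G] {K : Subgroup G}
    [K.Normal] [IsSimpleGroup (G ⧸ K)] {M : Subgroup G} [M.Normal] (hKM : K < M) : M = ⊤ := by
  rcases (Normal.map inferInstance _ (mk'_surjective K) : (M.map (mk' K)).Normal).eq_bot_or_eq_top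
    with h | h
  · rw [map_eq_bot_iff, ker_mk'] at h
    exact absurd h hKM.not_ge
  · simpa [comap_map_eq, sup_of_le_left hKM.le] using congr_arg (comap (mk' K)) h

lemma Subgroup.center_eq_top_of_sup_center_eq_top {K : Type*} [Group K] (H : Subgroup K)
    [IsMulCommutative H] (h : H ⊔ center K = ⊤) : center K = ⊤ := by
  have hH : H ≤ center K := by
    rw [← centralizer_univ, ← coe_top, ← h, le_centralizer_iff]
    exact sup_le (le_centralizer_iff_isMulCommutative.mpr inferInstance)
      (center_le_centralizer _)
  rwa [sup_of_le_right hH] at h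

section CentralQuotient

variable {G : Type*} [Group G] (K : Subgroup G) [K.Normal]

def conjCentralQuotient : G →* MulAut (K ⧸ center K) :=
  (MulAut.quotient (center K)).comp MulAut.conjNormal

lemma conjCentralQuotient_apply_mk (g : G) (x : K) :
    conjCentralQuotient K g x = (MulAut.conjNormal g x : K ⧸ center K) := rfl

lemma le_ker_conjCentralQuotient (hV : ∀ q : K ⧸ center K, q * q = 1) :
    K ≤ (conjCentralQuotient K).ker := by
  intro k hk
  rw [MonoidHom.mem_ker]
  ext q
  induction q using QuotientGroup.induction_on with | H x => ?_
  have hconj : MulAut.conjNormal k x = ⟨k, hk⟩ * x * (⟨k, hk⟩ : K)⁻¹ :=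
    Subtype.ext (MulAut.conjNormal_apply k x)
  rw [conjCentralQuotient_apply_mk, hconj, mk_mul, mk_mul, mk_inv,
    (commute_of_forall_mul_self_eq_one hV (⟨k, hk⟩ : K) (x : K ⧸ center K)).eq,
    mul_inv_cancel_right]
  rfl

lemma commutator_mem_of_conjCentralQuotient_eq_one {g : G} (hg : conjCentralQuotient K g = 1)
    {x : G} (hx : x ∈ K) : g * x * g⁻¹ * x⁻¹ ∈ (center K).map K.subtype := by
  have h : (MulAut.conjNormal g ⟨x, hx⟩ : K ⧸ center K) = (⟨x, hx⟩ : K) :=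
    DFunLike.congr_fun hg ((⟨x, hx⟩ : K) : K ⧸ center K)
  refine ⟨MulAut.conjNormal g ⟨x, hx⟩ / ⟨x, hx⟩, eq_iff_div_mem.mp h, ?_⟩
  simp [div_eq_mul_inv, MulAut.conjNormal_apply]

end CentralQuotient

lemma exists_notMem_pow_mem_of_prime_dvd_card_quotient {G : Type*} [Group G] {K : Subgroup G}
    [K.Normal] [Finite (G ⧸ K)] {p : ℕ} [Fact p.Prime] (hp : p ∣ Nat.card (G ⧸ K)) :
    ∃ g ∉ K, g ^ p ∈ K := by
  obtain ⟨q, hq⟩ := exists_prime_orderOf_dvd_card' p hp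
  obtain ⟨g, rfl⟩ := mk'_surjective K q
  refine ⟨g, fun hg => ?_, ?_⟩
  · rw [mk'_apply, (eq_one_iff g).mpr hg, orderOf_one] at hq
    exact (Fact.out : p.Prime).one_lt.ne hq
  · rw [← eq_one_iff, mk_pow, ← hq]
    exact pow_orderOf_eq_one _

section Extension

variable {G : Type*} [Group G] [Finite G] {K : Subgroup G} [K.Normal]

theorem eq_map_center_of_normal_isMulCommutative (hK32 : Nat.card K = 32)
    (hZ2 : Nat.card (center K) = 2) (hV : ∀ q : K ⧸ center K, q * q = 1)
    [IsSimpleGroup (G ⧸ K)] (hQ : Nat.card (G ⧸ K) = 60) (hρ : conjCentralQuotient K ≠ 1)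
    (N : Subgroup G) [N.Normal] [IsMulCommutative N] (hN : N ≠ ⊥) :
    N = (center K).map K.subtype := by
  have hNK : N ≤ K := le_of_isSimpleGroup_quotient (by rw [hQ]; norm_num) N
  set W := (N.subgroupOf K).map (mk' (center K))
  by_cases hW_bot : W = ⊥
  · have hNZ : N ≤ (center K).map K.subtype := fun n hn => by
      have : mk' (center K) ⟨n, hNK hn⟩ ∈ W := mem_map_of_mem _ (mem_subgroupOf.mpr hn)
      rw [hW_bot, mem_bot, mk'_apply, eq_one_iff] at this
      exact ⟨_, this, rfl⟩
    have hZ : Nat.card ((center K).map K.subtype) = 2 := by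
      rw [card_map_of_injective K.subtype_injective, hZ2]
    have hN2 := (Nat.dvd_prime Nat.prime_two).mp (hZ ▸ card_dvd_of_le hNZ)
    refine eq_of_le_of_card_ge hNZ ?_
    rw [hZ, hN2.resolve_left (fun h => hN (card_eq_one.mp h))]
  by_cases hW_top : W = ⊤
  · have hsup := congr_arg (comap (mk' (center K))) hW_top
    rw [comap_map_eq, ker_mk', comap_top] at hsup
    have := center_eq_top_of_sup_center_eq_top _ hsup
    rw [this, card_top, hK32] at hZ2
    omega
  have : Fact (Nat.Prime 5) := ⟨Nat.prime_five⟩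
  obtain ⟨g, hgK, hg5⟩ := exists_notMem_pow_mem_of_prime_dvd_card_quotient (K := K) (p := 5)
    (by rw [hQ]; norm_num)
  have hWinv : ∀ w ∈ W, conjCentralQuotient K g w ∈ W := by
    rintro _ ⟨x, hx, rfl⟩
    refine ⟨MulAut.conjNormal g x, mem_subgroupOf.mpr ?_, rfl⟩
    simpa [MulAut.conjNormal_apply] using ‹N.Normal›.conj_mem _ (mem_subgroupOf.mp hx) g
  have hVcard : Nat.card (K ⧸ center K) = 16 := by
    have := card_eq_card_quotient_mul_card_subgroup (center K)
    rw [hK32, hZ2] at this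
    omega
  have hg : conjCentralQuotient K g = 1 :=
    MulAut.eq_one_of_pow_five_eq_one_of_invariant hV hVcard _
      (by rw [← map_pow]; exact le_ker_conjCentralQuotient K hV hg5) W hW_bot hW_top hWinv
  have hker : (conjCentralQuotient K).ker = ⊤ := eq_top_of_lt_of_isSimpleGroup_quotient
    (SetLike.lt_iff_le_and_exists.mpr ⟨le_ker_conjCentralQuotient K hV, g, hg, hgK⟩)
  exact absurd (MonoidHom.ker_eq_top_iff.mp hker) hρ

end Extension

theorem jordanConstant_eq_card_div_two_of_forall_normal_isMulCommutative_eq {G : Type*}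
    [Group G] [Finite G] (Z : Subgroup G) [Z.Normal] (hZ : Nat.card Z = 2)
    (huniq : ∀ N : Subgroup G, N.Normal → IsMulCommutative N → N ≠ ⊥ → N = Z) :
    jordanConstant G = Nat.card G / 2 := by
  have hZG : Z.index * 2 = Nat.card G := hZ ▸ Z.index_mul_card
  have : Z.index ≠ 0 := index_ne_zero_of_finite
  have hZ_comm : IsMulCommutative Z := by
    have : Fact (Nat.Prime 2) := ⟨Nat.prime_two⟩
    exact (isCyclic_of_prime_card hZ).isMulCommutative
  refine IsLeast.csInf_eq ⟨⟨by omega, fun H _ => ?_⟩, fun d ⟨_, hd⟩ => ?_⟩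
  · by_cases hH : H = ⊤
    · subst hH
      refine ⟨Z.subgroupOf ⊤, inferInstance, inferInstance, ?_⟩
      rw [← relIndex, relIndex_top_right]
      omega
    · refine ⟨⊥, inferInstance, inferInstance, ?_⟩
      have h := H.index_mul_card
      have : H.index ≠ 1 := fun h => hH (index_eq_one.mp h)
      have : H.index ≠ 0 := index_ne_zero_of_finite
      have : 2 ≤ H.index := by omega
      rw [index_bot, Nat.le_div_iff_mul_le two_pos]
      nlinarith
  · obtain ⟨A, hA_normal, hA_comm, hA_index⟩ := hd ⊤ inferInstance
    let A' := A.map (topEquiv : (⊤ : Subgroup G) ≃* G).toMonoidHom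
    have hA' : Nat.card A' = Nat.card A := card_map_of_injective topEquiv.injective
    have hA_card : Nat.card A ≤ 2 := by
      by_cases hA : A' = ⊥
      · rw [← hA', hA, card_bot]; omega
      · rw [← hA', huniq A' (hA_normal.map _ topEquiv.surjective) inferInstance hA, hZ]
    have h := A.index_mul_card
    rw [card_top] at h
    rw [Nat.div_le_iff_le_mul_add_pred two_pos]
    nlinarith

/-- Let `G` be a finite group with a normal subgroup `K` of order `32` whose center `Z(K)`
has order `2`, such that `K/Z(K)` is an elementary abelian `2`-group, `G/K ≅ Alt₅`, and
the conjugation action of `G` on `K/Z(K)` is nontrivial. Then every nontrivial abelian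
normal subgroup of `G` equals `Z(K)`, and the Jordan constant of `G` is `960`. -/
theorem stmt_10 (G : Type*) [Group G] [Finite G] (K : Subgroup G) (hKn : K.Normal)
    (hK32 : Nat.card K = 32)
    (hZ2 : Nat.card (Subgroup.center K) = 2)
    (hElem : ∀ q : K ⧸ Subgroup.center K, q * q = 1)
    (hQuot : Nonempty ((G ⧸ K) ≃* alternatingGroup (Fin 5)))
    (hNontriv : ∃ g x : G, x ∈ K ∧
      g * x * g⁻¹ * x⁻¹ ∉ (Subgroup.center K).map K.subtype) :
    (∀ N : Subgroup G, N.Normal → IsMulCommutative N → N ≠ ⊥ →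
      N = (Subgroup.center K).map K.subtype) ∧
    jordanConstant G = 960 := by
  obtain ⟨e⟩ := hQuot
  have : IsSimpleGroup (G ⧸ K) := e.isSimpleGroup
  have hQ : Nat.card (G ⧸ K) = 60 := by
    rw [Nat.card_congr e.toEquiv, nat_card_alternatingGroup, Nat.card_fin]; rfl
  have hρ : conjCentralQuotient K ≠ 1 := by
    obtain ⟨g, x, hx, hgx⟩ := hNontriv
    exact fun h => hgx (commutator_mem_of_conjCentralQuotient_eq_one K (by rw [h]; rfl) hx)
  have huniq : ∀ N : Subgroup G, N.Normal → IsMulCommutative N → N ≠ ⊥ →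
      N = (center K).map K.subtype := fun N _ _ =>
    eq_map_center_of_normal_isMulCommutative hK32 hZ2 hElem hQ hρ N
  refine ⟨huniq, ?_⟩
  have hG : Nat.card G = 1920 := by
    rw [card_eq_card_quotient_mul_card_subgroup K, hQ, hK32]
  rw [jordanConstant_eq_card_div_two_of_forall_normal_isMulCommutative_eq _
    (by rw [card_map_of_injective K.subtype_injective, hZ2]) huniq, hG]
end

section
/- Let ρ : Alt₅ → GL(4, F₂) be a nontrivial group homomorphism, giving F₂⁴ the structure of an Alt₅-representation over F₂. Then this representation is irreducible: every F₂-subspace of F₂⁴ that is invariant under ρ(g) for all g ∈ Alt₅ is either the zero subspace or all of F₂⁴. -/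
/-!
An invariant subspace `0 < W < F₂⁴` has dimension at most 3, and so does `F₂⁴ ⧸ W`. Since `Alt₅` is
simple of order 60 and `60` divides none of `|GL(n, F₂)| = 1, 1, 6, 168` for `n ≤ 3`, `Alt₅` acts
trivially on both `W` and `F₂⁴ ⧸ W`. Then every `ρ g` is unipotent with `(ρ g - 1)² = 0`, which in
characteristic 2 says `ρ (g²) = 1`. So the kernel of `ρ` contains the nontrivial square
`(1 2 3 4 5)²`, and by simplicity `ρ` is trivial.
-/

open Module

section SimpleGroup

variable {G : Type*} [Group G] [IsSimpleGroup G]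

lemma MonoidHom.eq_one_of_not_card_dvd {H : Type*} [Group H] (f : G →* H)
    (h : ¬ Nat.card G ∣ Nat.card H) : f = 1 := by
  rcases f.normal_ker.eq_bot_or_eq_top with hker | hker
  · exact absurd (Subgroup.card_dvd_of_injective f (f.ker_eq_bot_iff.mp hker)) h
  · exact MonoidHom.ker_eq_top_iff.mp hker

lemma MonoidHom.eq_one_of_map_sq_eq_one {M : Type*} [MulOneClass M] (f : G →* M)
    (hf : ∀ g, f (g ^ 2) = 1) {g : G} (hg : g ^ 2 ≠ 1) : f = 1 := by
  rcases f.normal_ker.eq_bot_or_eq_top with hker | hker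
  · exact absurd (Subgroup.mem_bot.mp (hker ▸ f.mem_ker.mpr (hf g))) hg
  · exact MonoidHom.ker_eq_top_iff.mp hker

end SimpleGroup

lemma Module.End.natCard_units_eq_card_GL {K V : Type*} [Field K] [AddCommGroup V] [Module K V]
    [FiniteDimensional K V] :
    Nat.card (Module.End K V)ˣ = Nat.card (GL (Fin (finrank K V)) K) :=
  Nat.card_congr
    (Units.mapEquiv (LinearMap.toMatrixAlgEquiv (Module.finBasis K V)).toMulEquiv).toEquiv

lemma not_sixty_dvd_card_GL_zmod_two {n : ℕ} (hn : n ≤ 3) :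
    ¬ 60 ∣ Nat.card (GL (Fin n) (ZMod 2)) := by
  rw [Matrix.card_GL_field, ZMod.card]
  interval_cases n <;> decide

lemma Representation.eq_one_of_finrank_le_three {V : Type*} [AddCommGroup V]
    [Module (ZMod 2) V] [FiniteDimensional (ZMod 2) V]
    (σ : Representation (ZMod 2) (alternatingGroup (Fin 5)) V)
    (hV : finrank (ZMod 2) V ≤ 3) : σ = 1 := by
  have hcard : Nat.card (alternatingGroup (Fin 5)) = 60 := by
    rw [nat_card_alternatingGroup, Nat.card_fin]; rfl
  have h := σ.asGroupHom.eq_one_of_not_card_dvd <| by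
    rw [hcard, Module.End.natCard_units_eq_card_GL]
    exact not_sixty_dvd_card_GL_zmod_two hV
  ext g : 1
  exact congrArg Units.val (DFunLike.congr_fun h g)

lemma Representation.map_sq_eq_one_of_charTwo {K G V : Type*} [Ring K] [CharP K 2] [Monoid G]
    [AddCommGroup V] [Module K V] (σ : Representation K G V) {W : Submodule K V}
    (hle : ∀ g, W ≤ W.comap (σ g)) (hsub : σ.subrepresentation W hle = 1)
    (hquot : σ.quotient W hle = 1) (g : G) : σ (g ^ 2) = 1 := by
  refine LinearMap.ext fun v => ?_
  have hfix : ∀ w ∈ W, σ g w = w := fun w hw => by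
    simpa using congrArg Subtype.val (LinearMap.congr_fun (DFunLike.congr_fun hsub g) ⟨w, hw⟩)
  have hmem : σ g v - v ∈ W := by
    rw [← Submodule.Quotient.eq]
    simpa using LinearMap.congr_fun (DFunLike.congr_fun hquot g) (Submodule.Quotient.mk v)
  have hdouble : ∀ x : V, x + x = 0 := fun x => by
    rw [← two_smul K x, CharTwo.two_eq_zero, zero_smul]
  have h := hfix _ hmem
  rw [map_sub, sub_eq_iff_eq_add] at h
  rw [map_pow, pow_two, Module.End.mul_apply, h, sub_add_eq_add_sub, hdouble, zero_sub,
    Module.End.one_apply, ← add_eq_zero_iff_neg_eq, hdouble]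

/-- If `ρ : Alt₅ → GL(4, F₂)` is a nontrivial homomorphism, then the resulting
representation of `Alt₅` on `F₂⁴` is irreducible: every subspace of `F₂⁴` invariant
under all `ρ g` is `⊥` or `⊤`. -/
theorem stmt_12 (ρ : alternatingGroup (Fin 5) →* Matrix.GeneralLinearGroup (Fin 4) (ZMod 2))
    (hρ : ρ ≠ 1)
    (W : Submodule (ZMod 2) (Fin 4 → ZMod 2))
    (hW : ∀ g : alternatingGroup (Fin 5), ∀ v ∈ W,
      Matrix.mulVec (ρ g : Matrix (Fin 4) (Fin 4) (ZMod 2)) v ∈ W) :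
    W = ⊥ ∨ W = ⊤ := by
  by_contra! hWne
  let σ : Representation (ZMod 2) (alternatingGroup (Fin 5)) (Fin 4 → ZMod 2) :=
    Matrix.toLinAlgEquiv'.toMonoidHom.comp ((Units.coeHom _).comp ρ)
  have hle : ∀ g, W ≤ W.comap (σ g) := hW
  have hfinrank := W.finrank_quotient_add_finrank
  rw [finrank_fin_fun] at hfinrank
  have hW0 : finrank (ZMod 2) W ≠ 0 := fun h => hWne.1 (Submodule.finrank_eq_zero.mp h)
  have hW4 : finrank (ZMod 2) W < 4 := by simpa using Submodule.finrank_lt hWne.2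
  have hsub := (σ.subrepresentation W hle).eq_one_of_finrank_le_three (by omega)
  have hquot := (σ.quotient W hle).eq_one_of_finrank_le_three (by omega)
  let c : alternatingGroup (Fin 5) :=
    ⟨finRotate 5, by rw [Equiv.Perm.mem_alternatingGroup, sign_finRotate]; decide⟩
  have hc : c ^ 2 ≠ 1 := by decide
  have hσ : σ = 1 :=
    MonoidHom.eq_one_of_map_sq_eq_one σ (σ.map_sq_eq_one_of_charTwo hle hsub hquot) hc
  refine hρ (MonoidHom.ext fun g => Units.ext (Matrix.toLinAlgEquiv'.injective ?_))
  exact (DFunLike.congr_fun hσ g).trans (map_one Matrix.toLinAlgEquiv').symm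
end

section
/- The special linear group SL(2, F₅) over the field with five elements (isomorphic to the binary icosahedral group) has Jordan constant equal to 60; equivalently, the only abelian normal subgroups of SL(2, F₅) are the trivial subgroup and its center of order 2. -/
/-!
In any group `G`, `Z(G) ∩ H` is an abelian normal subgroup of `H` whose index divides
`[G : Z(G)]`. If `G` is finite and all its abelian normal subgroups are central, taking `H = G`
shows that no smaller bound works, so the Jordan constant is `[G : Z(G)]`.

For `SL(2, F₅)` centrality is a finite check: for `g ≠ ±1`, the elements `g`, `a g a⁻¹`, `b g b⁻¹`
(with `a`, `b` below) do not pairwise commute, although they would all lie in any abelian normal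
subgroup containing `g`. Hence `Z = {±1}` and the Jordan constant is `120 / 2 = 60`.
-/

open Subgroup

theorem Subgroup.eq_bot_or_eq_of_le_of_prime_card {G : Type*} [Group G] {A B : Subgroup G}
    (hAB : A ≤ B) (hB : (Nat.card B).Prime) : A = ⊥ ∨ A = B := by
  have : Finite B := Nat.finite_of_card_ne_zero hB.ne_zero
  rcases (Nat.dvd_prime hB).mp (card_dvd_of_le hAB) with h | h
  · exact Or.inl (card_eq_one.mp h)
  · exact Or.inr (eq_of_le_of_card_ge hAB h.ge)

section JordanConstant

variable {G : Type*} [Group G]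

theorem exists_normal_isMulCommutative_index_le_index_center [(center G).FiniteIndex]
    (H : Subgroup G) :
    ∃ A : Subgroup H, A.Normal ∧ IsMulCommutative A ∧ A.index ≤ (center G).index :=
  ⟨(center G).subgroupOf H, inferInstance, inferInstance,
    Nat.le_of_dvd (Nat.pos_of_ne_zero FiniteIndex.index_ne_zero) (relIndex_dvd_index_of_normal _ _)⟩

theorem jordanConstant_le_index_center [(center G).FiniteIndex] :
    jordanConstant G ≤ (center G).index :=
  Nat.sInf_le ⟨Nat.pos_of_ne_zero FiniteIndex.index_ne_zero,
    fun H _ => exists_normal_isMulCommutative_index_le_index_center H⟩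

theorem index_center_le_jordanConstant [Finite G]
    (h : ∀ A : Subgroup G, A.Normal → IsMulCommutative A → A ≤ center G) :
    (center G).index ≤ jordanConstant G := by
  refine le_csInf ⟨(center G).index, Nat.pos_of_ne_zero FiniteIndex.index_ne_zero,
    fun H _ => exists_normal_isMulCommutative_index_le_index_center H⟩ ?_
  rintro d ⟨-, hd⟩
  obtain ⟨A, hA, hAc, hAd⟩ := hd ⊤ inferInstance
  set e : (⊤ : Subgroup G) ≃* G := topEquiv
  have hA' : A.map e.toMonoidHom ≤ center G := h _ (hA.map _ e.surjective) inferInstance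
  calc (center G).index ≤ (A.map e.toMonoidHom).index :=
        Nat.le_of_dvd (Nat.pos_of_ne_zero FiniteIndex.index_ne_zero) (index_dvd_of_le hA')
    _ = A.index := index_map_equiv A e
    _ ≤ d := hAd

theorem jordanConstant_eq_index_center [Finite G]
    (h : ∀ A : Subgroup G, A.Normal → IsMulCommutative A → A ≤ center G) :
    jordanConstant G = (center G).index :=
  le_antisymm jordanConstant_le_index_center (index_center_le_jordanConstant h)

end JordanConstant

namespace SL25

local notation "SL₂₅" => Matrix.SpecialLinearGroup (Fin 2) (ZMod 5)

def a : SL₂₅ := ⟨!![0, 1; -1, 0], by decide⟩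

def b : SL₂₅ := ⟨!![0, 1; -1, 1], by decide⟩

set_option maxRecDepth 40000 in
theorem eq_one_or_eq_neg_one_of_commute_conj : ∀ g : SL₂₅,
    Commute g (a * g * a⁻¹) → Commute g (b * g * b⁻¹) →
      Commute (a * g * a⁻¹) (b * g * b⁻¹) → g = 1 ∨ g = -1 := by
  unfold Commute SemiconjBy
  decide

set_option maxRecDepth 40000 in
theorem card : Nat.card SL₂₅ = 120 := by
  rw [Nat.card_eq_fintype_card]
  decide

theorem neg_one_ne_one : (-1 : SL₂₅) ≠ 1 := by decide

theorem eq_one_or_eq_neg_one_of_mem {A : Subgroup SL₂₅} [A.Normal] [IsMulCommutative A]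
    {g : SL₂₅} (hg : g ∈ A) : g = 1 ∨ g = -1 := by
  have hga : a * g * a⁻¹ ∈ A := Normal.conj_mem inferInstance g hg a
  have hgb : b * g * b⁻¹ ∈ A := Normal.conj_mem inferInstance g hg b
  exact eq_one_or_eq_neg_one_of_commute_conj g (setLike_mul_comm hg hga)
    (setLike_mul_comm hg hgb) (setLike_mul_comm hga hgb)

theorem mem_center_iff {g : SL₂₅} : g ∈ center SL₂₅ ↔ g = 1 ∨ g = -1 := by
  refine ⟨eq_one_or_eq_neg_one_of_mem, ?_⟩
  rintro (rfl | rfl)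
  · exact one_mem _
  · exact Subgroup.mem_center_iff.mpr Commute.neg_one_right

theorem le_center {A : Subgroup SL₂₅} (hA : A.Normal) (hAc : IsMulCommutative A) :
    A ≤ center SL₂₅ :=
  fun _ hg => mem_center_iff.mpr (eq_one_or_eq_neg_one_of_mem hg)

theorem card_center : Nat.card (center SL₂₅) = 2 := by
  have hcenter : (center SL₂₅ : Set SL₂₅) = {1, -1} := by
    ext g
    exact mem_center_iff
  rw [← SetLike.coe_sort_coe, hcenter, Nat.card_coe_set_eq, Set.ncard_pair neg_one_ne_one.symm]

theorem index_center : (center SL₂₅).index = 60 := by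
  have := card_mul_index (center SL₂₅)
  rw [card_center, card] at this
  omega

end SL25

/-- `SL(2, F₅)` has Jordan constant `60`; equivalently, the only abelian normal subgroups
of `SL(2, F₅)` are the trivial subgroup and the center, which has order `2`. -/
theorem stmt_17 :
    jordanConstant (Matrix.SpecialLinearGroup (Fin 2) (ZMod 5)) = 60 ∧
    (∀ A : Subgroup (Matrix.SpecialLinearGroup (Fin 2) (ZMod 5)), A.Normal → IsMulCommutative A →
      A = ⊥ ∨ A = Subgroup.center (Matrix.SpecialLinearGroup (Fin 2) (ZMod 5))) ∧
    Nat.card (Subgroup.center (Matrix.SpecialLinearGroup (Fin 2) (ZMod 5))) = 2 := by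
  refine ⟨?_, fun A hA hAc => eq_bot_or_eq_of_le_of_prime_card (SL25.le_center hA hAc)
    (by rw [SL25.card_center]; exact Nat.prime_two), SL25.card_center⟩
  rw [jordanConstant_eq_index_center fun A hA hAc => SL25.le_center hA hAc, SL25.index_center]
end
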